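/- arXiv:2605.06269 — 2 statements merged into one kernel-verified Lean document; each statement's English description precedes it below -/
import Mathlib

section
/- Let u, v : List α be conjugate words. Then for all x, y, x', y' : List α there exists a constant C : ℕ such that for every k : ℕ, levenshtein (x ++ u^k ++ y) (x' ++ v^k ++ y') ≤ C. -/
/-- Costs for the Levenshtein edit distance (as in the removed `Mathlib.Data.List.EditDistance.Defs`). -/
structure Levenshtein.Cost (α β δ : Type*) where
  delete : α → δ
  insert : β → δ
  substitute : α → β → δ

/-- The default cost structure: each insertion, deletion and substitution costs 1. -/
def Levenshtein.defaultCost {α : Type*} [DecidableEq α] : Levenshtein.Cost α α ℕ where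
  delete _ := 1
  insert _ := 1
  substitute a b := if a = b then 0 else 1

/-- The Levenshtein edit distance, given by its defining recursion
(the equations `levenshtein_nil_nil`, `levenshtein_nil_cons`, `levenshtein_cons_nil`,
`levenshtein_cons_cons` of the removed Mathlib file). -/
def levenshtein {α β δ : Type*} [AddZeroClass δ] [Min δ] (C : Levenshtein.Cost α β δ) :
    List α → List β → δ
  | [], [] => 0
  | [], y :: ys => C.insert y + levenshtein C [] ys
  | x :: xs, [] => C.delete x + levenshtein C xs []
  | x :: xs, y :: ys =>
    min (C.delete x + levenshtein C xs (y :: ys))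
      (min (C.insert y + levenshtein C (x :: xs) ys) (C.substitute x y + levenshtein C xs ys))

/-- `wpow u k` is the k-fold concatenation `u ++ u ++ ⋯ ++ u` (k copies). -/
def wpow {α : Type*} (u : List α) (k : ℕ) : List α := (List.replicate k u).flatten

/-! Writing `u = p ++ q` and `v = q ++ p`, the power `u^(k+1) = p ++ v^k ++ q` shares the factor
`v^k` with `v^(k+1) = (q ++ p) ++ v^k`. Edit distance is subadditive under concatenation and
vanishes on a common factor, so for `k ≥ 1` the distance is bounded by the edit distance of the
remaining short pieces, which does not depend on `k`. -/

section Equations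

variable {α β δ : Type*} [AddZeroClass δ] [Min δ] (C : Levenshtein.Cost α β δ)

@[simp]
theorem levenshtein_nil_nil : levenshtein C [] [] = 0 := by
  rw [levenshtein]

@[simp]
theorem levenshtein_nil_cons (y : β) (ys : List β) :
    levenshtein C [] (y :: ys) = C.insert y + levenshtein C [] ys := by
  rw [levenshtein]

@[simp]
theorem levenshtein_cons_nil (x : α) (xs : List α) :
    levenshtein C (x :: xs) [] = C.delete x + levenshtein C xs [] := by
  rw [levenshtein]

theorem levenshtein_cons_cons (x : α) (xs : List α) (y : β) (ys : List β) :
    levenshtein C (x :: xs) (y :: ys) =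
      min (C.delete x + levenshtein C xs (y :: ys))
        (min (C.insert y + levenshtein C (x :: xs) ys) (C.substitute x y + levenshtein C xs ys)) := by
  rw [levenshtein]

end Equations

section EditBounds

variable {α β δ : Type*} [AddZeroClass δ] [LinearOrder δ] (C : Levenshtein.Cost α β δ)

theorem levenshtein_le_insert_add (xs : List α) (y : β) (ys : List β) :
    levenshtein C xs (y :: ys) ≤ C.insert y + levenshtein C xs ys := by
  cases xs with
  | nil => simp
  | cons x xs =>
    rw [levenshtein_cons_cons]
    exact (min_le_right _ _).trans (min_le_left _ _)

theorem levenshtein_le_delete_add (x : α) (xs : List α) (ys : List β) :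
    levenshtein C (x :: xs) ys ≤ C.delete x + levenshtein C xs ys := by
  cases ys with
  | nil => simp
  | cons y ys =>
    rw [levenshtein_cons_cons]
    exact min_le_left _ _

theorem levenshtein_le_substitute_add (x : α) (xs : List α) (y : β) (ys : List β) :
    levenshtein C (x :: xs) (y :: ys) ≤ C.substitute x y + levenshtein C xs ys := by
  rw [levenshtein_cons_cons]
  exact (min_le_right _ _).trans (min_le_right _ _)

theorem levenshtein_self_nonpos {C : Levenshtein.Cost α α δ} (hC : ∀ a, C.substitute a a = 0)
    (s : List α) : levenshtein C s s ≤ 0 := by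
  induction s with
  | nil => simp
  | cons x s ih =>
    calc levenshtein C (x :: s) (x :: s)
        ≤ C.substitute x x + levenshtein C s s := levenshtein_le_substitute_add C _ _ _ _
      _ ≤ 0 := by rwa [hC, zero_add]

end EditBounds

section Subadditivity

variable {α β δ : Type*} [AddCommMonoid δ] [LinearOrder δ] [IsOrderedAddMonoid δ]

theorem levenshtein_append_le (C : Levenshtein.Cost α β δ) (a b : List α) (c d : List β) :
    levenshtein C (a ++ b) (c ++ d) ≤ levenshtein C a c + levenshtein C b d := by
  induction a generalizing c with
  | nil =>
    induction c with
    | nil => simp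
    | cons y c ih =>
      calc levenshtein C b (y :: (c ++ d))
          ≤ C.insert y + levenshtein C b (c ++ d) := levenshtein_le_insert_add C _ _ _
        _ ≤ C.insert y + (levenshtein C [] c + levenshtein C b d) := by gcongr; simpa using ih
        _ = levenshtein C [] (y :: c) + levenshtein C b d := by simp [add_assoc]
  | cons x a iha =>
    induction c with
    | nil =>
      calc levenshtein C (x :: (a ++ b)) d
          ≤ C.delete x + levenshtein C (a ++ b) d := levenshtein_le_delete_add C _ _ _
        _ ≤ C.delete x + (levenshtein C a [] + levenshtein C b d) := by
          gcongr; simpa using iha []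
        _ = levenshtein C (x :: a) [] + levenshtein C b d := by simp [add_assoc]
    | cons y c ihc =>
      rw [levenshtein_cons_cons C x a y c, ← min_add_add_right,
        ← min_add_add_right, add_assoc, add_assoc, add_assoc]
      refine le_min ?_ (le_min ?_ ?_)
      · exact (levenshtein_le_delete_add C _ _ _).trans (add_le_add_right (iha _) _)
      · exact (levenshtein_le_insert_add C _ _ _).trans (add_le_add_right ihc _)
      · exact (levenshtein_le_substitute_add C _ _ _ _).trans (add_le_add_right (iha _) _)

theorem levenshtein_append_append_le {C : Levenshtein.Cost α α δ}
    (hC : ∀ a, C.substitute a a = 0) (a m b c d : List α) :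
    levenshtein C (a ++ m ++ b) (c ++ m ++ d) ≤ levenshtein C a c + levenshtein C b d := by
  rw [List.append_assoc, List.append_assoc]
  calc levenshtein C (a ++ (m ++ b)) (c ++ (m ++ d))
      ≤ levenshtein C a c + (levenshtein C m m + levenshtein C b d) := by
        grw [levenshtein_append_le C a, levenshtein_append_le C m]
    _ ≤ levenshtein C a c + levenshtein C b d := by grw [levenshtein_self_nonpos hC m, zero_add]

end Subadditivity

theorem List.IsRotated.exists_append_swap {α : Type*} {l l' : List α} (h : l ~r l') :
    ∃ p q, l = p ++ q ∧ l' = q ++ p := by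
  obtain ⟨n, rfl⟩ := h
  exact ⟨_, _, (List.take_append_drop (n % l.length) l).symm, List.rotate_eq_drop_append_take_mod⟩

section Powers

variable {α : Type*}

theorem wpow_zero (u : List α) : wpow u 0 = [] := rfl

theorem wpow_succ (u : List α) (k : ℕ) : wpow u (k + 1) = u ++ wpow u k := by
  simp [wpow, List.replicate_succ]

theorem wpow_append_succ (p q : List α) (k : ℕ) :
    wpow (p ++ q) (k + 1) = p ++ wpow (q ++ p) k ++ q := by
  induction k with
  | zero => simp [wpow_succ, wpow_zero]
  | succ k ih => rw [wpow_succ, ih, wpow_succ]; simp only [List.append_assoc]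

end Powers

theorem stmt_3 {α : Type*} [DecidableEq α] (u v : List α) (huv : List.IsRotated u v) :
    ∀ x y x' y' : List α, ∃ C : ℕ, ∀ k : ℕ,
      levenshtein Levenshtein.defaultCost (x ++ wpow u k ++ y) (x' ++ wpow v k ++ y') ≤ C := by
  obtain ⟨p, q, rfl, rfl⟩ := huv.exists_append_swap
  have hC : ∀ a : α, Levenshtein.defaultCost.substitute a a = 0 := by
    simp [Levenshtein.defaultCost]
  intro x y x' y'
  refine ⟨max (levenshtein Levenshtein.defaultCost (x ++ y) (x' ++ y'))
    (levenshtein Levenshtein.defaultCost (x ++ p) (x' ++ (q ++ p)) +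
      levenshtein Levenshtein.defaultCost (q ++ y) y'), ?_⟩
  rintro (_ | k)
  · simp [wpow_zero]
  · calc _ = levenshtein Levenshtein.defaultCost ((x ++ p) ++ wpow (q ++ p) k ++ (q ++ y))
            ((x' ++ (q ++ p)) ++ wpow (q ++ p) k ++ y') := by
          rw [wpow_append_succ, wpow_succ]; simp only [List.append_assoc]
      _ ≤ _ := levenshtein_append_append_le hC _ _ _ _ _
      _ ≤ _ := le_max_right _ _
end

section
/- Let a b : α with a ≠ b, and define word relations R, S : List α → Set (List α) by R w = {List.replicate w.length a, List.replicate w.length b} and S w = {List.replicate w.length a}. Then, with respect to the Levenshtein metric, D(R, S) = ⊤. -/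
open scoped Classical

/-- The domain of a word relation. -/
def dom {A B : Type*} (R : List A → Set (List B)) : Set (List A) := {u | (R u).Nonempty}

/-- Directed distance between two sets of words. -/
noncomputable def dirDist {B : Type*} (d : List B → List B → ℕ∞) (L L' : Set (List B)) : ℕ∞ :=
  ⨆ v ∈ L, ⨅ v' ∈ L', d v v'

/-- Hausdorff distance between two sets of words. -/
noncomputable def hausDist {B : Type*} (d : List B → List B → ℕ∞) (L L' : Set (List B)) : ℕ∞ :=
  max (dirDist d L L') (dirDist d L' L)

/-- Distance between two word relations. -/
noncomputable def relDist {A B : Type*} (d : List B → List B → ℕ∞)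
    (R S : List A → Set (List B)) : ℕ∞ :=
  if dom R = dom S then ⨆ u ∈ dom R, hausDist d (R u) (S u) else ⊤

/-! On an input of length `n`, `R` outputs `bⁿ` while the only output of `S` is `aⁿ`, and the
Levenshtein distance between `bⁿ` and `aⁿ` is `n`. Both relations are total, so `D(R, S)` is a
supremum over all inputs and exceeds every `n`. -/

theorem levenshtein_replicate_replicate {α : Type*} [DecidableEq α] {x y : α} (hxy : x ≠ y)
    (m n : ℕ) :
    levenshtein Levenshtein.defaultCost (List.replicate m x) (List.replicate n y) = max m n := by
  induction m generalizing n with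
  | zero =>
    induction n with
    | zero => exact levenshtein.eq_1 _
    | succ n ih =>
      rw [List.replicate_zero] at ih ⊢
      rw [List.replicate_succ, levenshtein.eq_2, ih]
      simp [Levenshtein.defaultCost, add_comm]
  | succ m ihm =>
    induction n with
    | zero =>
      rw [List.replicate_succ, List.replicate_zero, levenshtein.eq_3, ← List.replicate_zero, ihm]
      simp [Levenshtein.defaultCost, add_comm]
    | succ n ihn =>
      rw [List.replicate_succ, List.replicate_succ, levenshtein.eq_4, ← List.replicate_succ,
        ← List.replicate_succ, ihm, ihm, ihn]
      simp only [Levenshtein.defaultCost, hxy, ↓reduceIte, Nat.add_min_add_left,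
        Nat.add_max_add_right]
      omega

section WordRelation

variable {A B : Type*} {d : List B → List B → ℕ∞}

theorem le_hausDist_singleton {L : Set (List B)} {v : List B} (hv : v ∈ L) (w : List B) :
    d v w ≤ hausDist d L {w} :=
  calc d v w = ⨅ v' ∈ ({w} : Set (List B)), d v v' := iInf_singleton.symm
    _ ≤ dirDist d L {w} := le_iSup₂ (f := fun v _ => ⨅ v' ∈ ({w} : Set (List B)), d v v') v hv
    _ ≤ hausDist d L {w} := le_max_left _ _

theorem hausDist_le_relDist {R S : List A → Set (List B)} (hdom : dom R = dom S) {u : List A}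
    (hu : u ∈ dom R) : hausDist d (R u) (S u) ≤ relDist d R S := by
  rw [relDist, if_pos hdom]
  exact le_iSup₂ (f := fun u _ => hausDist d (R u) (S u)) u hu

end WordRelation

theorem stmt_12 {α : Type*} [DecidableEq α] (a b : α) (hab : a ≠ b)
    (R S : List α → Set (List α))
    (hR : ∀ w, R w = {List.replicate w.length a, List.replicate w.length b})
    (hS : ∀ w, S w = {List.replicate w.length a}) :
    relDist (fun v v' => ((levenshtein Levenshtein.defaultCost v v' : ℕ) : ℕ∞)) R S = ⊤ := by
  have hdom : dom R = dom S := by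
    ext u
    simp [dom, hR, hS]
  refine ENat.eq_top_iff_forall_ge.2 fun n => ?_
  let u := List.replicate n a
  have hu : u ∈ dom R := by simp [dom, hR]
  calc (n : ℕ∞)
      = (levenshtein Levenshtein.defaultCost (List.replicate n b) (List.replicate n a) : ℕ) := by
        rw [levenshtein_replicate_replicate hab.symm, max_self]
    _ ≤ hausDist _ (R u) (S u) := by
        rw [hR, hS, List.length_replicate]
        exact le_hausDist_singleton (by simp) _
    _ ≤ _ := hausDist_le_relDist hdom hu
end
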